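/- arXiv:2102.06835 — 2 statements merged into one kernel-verified Lean document; each statement's English description precedes it below -/
import Mathlib

section
/- (Fefferman's bilinear Carleson–square-function estimate.) Let F, G : ℝⁿ × (0,∞) → ℂ be measurable. Suppose that the measure |F(x,t)|² dx dt / t is a Carleson measure with norm ‖μ‖_c, i.e., for every ball B(y,h) in ℝⁿ one has ∫₀^h ∫_{B(y,h)} |F(x,t)|² dx dt / t ≤ ‖μ‖_c hⁿ. Define the conical square function 𝒜G(x) := (∬_{|x-y|<t} |G(y,t)|² dy dt / t^{n+1})^{1/2}. Then ∬_{ℝⁿ×(0,∞)} |F(y,t)| |G(y,t)| dy dt / t ≤ C(n) ‖μ‖_c^{1/2} ‖𝒜G‖_{L¹(ℝⁿ)}. -/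
/-!
Let `L = 2ⁿ⁺¹ ‖μ‖_c` and call a height `t` admissible for `x` when the area integral of `F` over
the part of the cone at `x` below height `t` is at most `L`. Integrating the Carleson condition
over `ball y t` and applying Chebyshev's inequality shows that at least half of `ball y t`
consists of points `x` for which `t` is admissible. Hence `|F G|(y, t) / t` is at most `2 / |B₁|`
times the integral of `|F G|(y, t) / tⁿ⁺¹` over those `x`. After exchanging the order of
integration, Cauchy–Schwarz over the admissible part of the cone at `x` bounds the contribution
of `x` by `L^{1/2} 𝒜G(x)`, because the admissible heights form an initial segment of `(0, ∞)`.
-/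

open MeasureTheory Metric Set ENNReal Module

section Generic

variable {α : Type*} [MeasurableSpace α]

theorem sq_lintegral_le_mul_lintegral {μ : Measure α} {a b c : α → ℝ≥0∞}
    (ha : AEMeasurable a μ) (hb : AEMeasurable b μ) (h : ∀ x, c x ^ 2 ≤ a x * b x) :
    (∫⁻ x, c x ∂μ) ^ 2 ≤ (∫⁻ x, a x ∂μ) * ∫⁻ x, b x ∂μ := by
  have hc : ∀ x, c x ≤ a x ^ (1/2 : ℝ) * b x ^ (1/2 : ℝ) := fun x => by
    rw [← ENNReal.mul_rpow_of_nonneg _ _ (by norm_num), one_div,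
      ENNReal.le_rpow_inv_iff (by norm_num), ENNReal.rpow_two]
    exact h x
  have hsq : ∀ u : ℝ≥0∞, (u ^ (1/2 : ℝ)) ^ (2 : ℝ) = u := fun u => by
    rw [← ENNReal.rpow_mul]; norm_num
  have holder := ENNReal.lintegral_mul_le_Lp_mul_Lq μ Real.HolderConjugate.two_two
    (ha.pow_const (1/2 : ℝ)) (hb.pow_const (1/2 : ℝ))
  simp only [Pi.mul_apply, hsq] at holder
  rw [← ENNReal.rpow_two, ← ENNReal.le_rpow_inv_iff two_pos, ← one_div,
    ENNReal.mul_rpow_of_nonneg _ _ (by norm_num)]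
  exact (lintegral_mono hc).trans holder

theorem measure_inter_lt_le_of_setLIntegral_le {μ : Measure α} {f : α → ℝ≥0∞} {s : Set α}
    (hs : MeasurableSet s) (hf : AEMeasurable f (μ.restrict s)) {L m : ℝ≥0∞} (hL : L ≠ ∞)
    (h : ∫⁻ x in s, f x ∂μ ≤ L * m) : μ (s ∩ {x | L < f x}) ≤ m := by
  rcases eq_or_ne L 0 with rfl | hL0
  · have hzero : f =ᵐ[μ.restrict s] 0 :=
      (lintegral_eq_zero_iff' hf).mp (by simpa using h)
    have : μ.restrict s {x | 0 < f x} = 0 :=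
      measure_mono_null (fun x hx => ne_of_gt hx) (ae_iff.mp hzero)
    rw [Measure.restrict_apply₀' hs.nullMeasurableSet, inter_comm] at this
    simp [this]
  · rw [← ENNReal.mul_le_mul_iff_right hL0 hL]
    calc L * μ (s ∩ {x | L < f x}) ≤ L * μ.restrict s {x | L ≤ f x} := by
          have hsub : s ∩ {x | L < f x} ⊆ {x | L ≤ f x} ∩ s :=
            fun x hx => ⟨le_of_lt (show L < f x from hx.2), hx.1⟩
          rw [Measure.restrict_apply₀' hs.nullMeasurableSet]
          exact mul_le_mul_right (measure_mono hsub) L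
      _ ≤ ∫⁻ x in s, f x ∂μ := mul_meas_ge_le_lintegral₀ hf L
      _ ≤ L * m := h

theorem measurable_setLIntegral_preimage_prodMk {β : Type*} [MeasurableSpace β]
    {ν : Measure β} [SFinite ν] {f : α × β → ℝ≥0∞} (hf : Measurable f) {s : Set (α × β)}
    (hs : MeasurableSet s) :
    Measurable fun a => ∫⁻ b in Prod.mk a ⁻¹' s, f (a, b) ∂ν := by
  have : ∀ a, ∫⁻ b in Prod.mk a ⁻¹' s, f (a, b) ∂ν = ∫⁻ b, s.indicator f (a, b) ∂ν := by
    intro a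
    rw [← lintegral_indicator (measurable_prodMk_left hs)]
    rfl
  simp_rw [this]
  exact (hf.indicator hs).lintegral_prod_right'

end Generic

theorem ENNReal.div_ofReal_pow_succ_mul_ofReal_pow (a : ℝ≥0∞) {t : ℝ} (ht : 0 < t)
    (k : ℕ) :
    a / ENNReal.ofReal (t ^ (k + 1)) * ENNReal.ofReal (t ^ k) = a / ENNReal.ofReal t := by
  have h0 : ENNReal.ofReal (t ^ k) ≠ 0 := by simp [pow_pos ht]
  rw [pow_succ, ENNReal.ofReal_mul (pow_nonneg ht.le k), mul_comm, ← mul_div_assoc,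
    ENNReal.mul_div_mul_left _ _ h0 ENNReal.ofReal_ne_top]

/-- The points of `S` not covered by the open intervals `(a, s)`, `s ∈ S`, form a subsingleton,
and countably many of these intervals already cover their union. -/
theorem measure_le_of_forall_measure_Ioc_le {ν : Measure ℝ} [NullSingletonClass ν] {a : ℝ}
    {S : Set ℝ} {L : ℝ≥0∞} (hS : S ⊆ Ioi a) (h : ∀ s ∈ S, ν (Ioc a s) ≤ L) : ν S ≤ L := by
  obtain ⟨T, hTS, hT, hcover⟩ :=
    TopologicalSpace.isOpen_biUnion_countable S (fun s => Ioo a s) (fun _ _ => isOpen_Ioo)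
  have hsub : (S \ ⋃ s ∈ S, Ioo a s).Subsingleton := by
    intro s₁ h₁ s₂ h₂
    by_contra hne
    rcases lt_or_gt_of_ne hne with hlt | hlt
    · exact h₁.2 (mem_biUnion h₂.1 ⟨hS h₁.1, hlt⟩)
    · exact h₂.2 (mem_biUnion h₁.1 ⟨hS h₂.1, hlt⟩)
  calc ν S ≤ ν (⋃ s ∈ S, Ioo a s) + ν (S \ ⋃ s ∈ S, Ioo a s) :=
        (measure_le_inter_add_sdiff _ _ _).trans (by gcongr; exact inter_subset_right)
    _ = ν (⋃ s ∈ T, Ioo a s) := by rw [hsub.measure_zero, add_zero, hcover]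
    _ = ⨆ s ∈ T, ν (Ioo a s) := measure_biUnion_eq_iSup hT fun s hs t ht =>
          ⟨max s t, by rcases max_choice s t with h | h <;> rw [h] <;> assumption,
            Ioo_subset_Ioo_right (le_max_left s t), Ioo_subset_Ioo_right (le_max_right s t)⟩
    _ ≤ L := iSup₂_le fun s hs => (measure_mono Ioo_subset_Ioc_self).trans (h s (hTS hs))

section MetricFubini

variable {X : Type*} [PseudoMetricSpace X] [MeasurableSpace X] [OpensMeasurableSpace X]
  [SecondCountableTopology X] {μ : Measure X} [SFinite μ]

theorem setLIntegral_lintegral_ball_eq {φ : X → ℝ≥0∞} (hφ : Measurable φ) (s : Set X)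
    (r : ℝ) :
    ∫⁻ x in s, ∫⁻ z in ball x r, φ z ∂μ ∂μ = ∫⁻ z, φ z * μ (ball z r ∩ s) ∂μ := by
  have hmeas : Measurable fun p : X × X => (ball p.1 r).indicator φ p.2 :=
    (hφ.comp measurable_snd).indicator (s := {p : X × X | dist p.2 p.1 < r})
      (measurableSet_lt (measurable_snd.dist measurable_fst) measurable_const)
  have hswap : ∀ x z, (ball x r).indicator φ z = (ball z r).indicator (fun _ => φ z) x := by
    intro x z
    by_cases hz : z ∈ ball x r
    · rw [indicator_of_mem hz, indicator_of_mem (mem_ball_comm.mp hz)]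
    · rw [indicator_of_notMem hz, indicator_of_notMem (mt mem_ball_comm.mp hz)]
  calc ∫⁻ x in s, ∫⁻ z in ball x r, φ z ∂μ ∂μ
      = ∫⁻ x in s, ∫⁻ z, (ball x r).indicator φ z ∂μ ∂μ := by
        simp_rw [lintegral_indicator measurableSet_ball]
    _ = ∫⁻ z, ∫⁻ x in s, (ball z r).indicator (fun _ => φ z) x ∂μ ∂μ := by
        rw [lintegral_lintegral_swap hmeas.aemeasurable]
        simp_rw [hswap]
    _ = ∫⁻ z, φ z * μ (ball z r ∩ s) ∂μ := by
        simp_rw [lintegral_indicator_const measurableSet_ball,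
          Measure.restrict_apply measurableSet_ball]

theorem lintegral_lintegral_mul_measure_ball_inter_eq {ν : Measure ℝ} [SFinite ν]
    {φ : X × ℝ → ℝ≥0∞} (hφ : Measurable φ) {Γ : Set (X × ℝ)} (hΓ : MeasurableSet Γ) :
    ∫⁻ t, ∫⁻ y, φ (y, t) * μ (ball y t ∩ {x | (x, t) ∈ Γ}) ∂μ ∂ν
      = ∫⁻ x, ∫⁻ t in {t | (x, t) ∈ Γ}, ∫⁻ y in ball x t, φ (y, t) ∂μ ∂ν ∂μ := by
  set H : X × ℝ → ℝ≥0∞ := fun p => ∫⁻ y in ball p.1 p.2, φ (y, p.2) ∂μ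
  have hH : Measurable H := measurable_setLIntegral_preimage_prodMk
    (f := fun q : (X × ℝ) × X => φ (q.2, q.1.2)) (s := {q | dist q.2 q.1.1 < q.1.2})
    (hφ.comp (measurable_snd.prodMk measurable_fst.snd))
    (measurableSet_lt (measurable_snd.dist measurable_fst.fst) measurable_fst.snd)
  calc ∫⁻ t, ∫⁻ y, φ (y, t) * μ (ball y t ∩ {x | (x, t) ∈ Γ}) ∂μ ∂ν
      = ∫⁻ t, ∫⁻ x, Γ.indicator H (x, t) ∂μ ∂ν := by
        refine lintegral_congr fun t => ?_
        rw [← setLIntegral_lintegral_ball_eq (φ := fun y => φ (y, t)) (by fun_prop)]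
        exact (lintegral_indicator (measurable_prodMk_right hΓ) _).symm
    _ = ∫⁻ x, ∫⁻ t, Γ.indicator H (x, t) ∂ν ∂μ :=
        lintegral_lintegral_swap ((hH.indicator hΓ).comp measurable_swap).aemeasurable
    _ = ∫⁻ x, ∫⁻ t in {t | (x, t) ∈ Γ}, ∫⁻ y in ball x t, φ (y, t) ∂μ ∂ν ∂μ := by
        exact lintegral_congr fun x => lintegral_indicator (measurable_prodMk_left hΓ) _

end MetricFubini

section UpperHalfSpace

variable {E : Type*} [NormedAddCommGroup E] [NormedSpace ℝ E] [MeasurableSpace E]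
  {μ : Measure E} {f g : E × ℝ → ℝ≥0∞}

noncomputable def coneDensity (μ : Measure E) (f : E × ℝ → ℝ≥0∞) (x : E) (t : ℝ) : ℝ≥0∞ :=
  ∫⁻ y in ball x t, f (y, t) ^ 2 / ENNReal.ofReal (t ^ (finrank ℝ E + 1)) ∂μ

noncomputable def truncatedAreaIntegral (μ : Measure E) (f : E × ℝ → ℝ≥0∞) (x : E) (s : ℝ) :
    ℝ≥0∞ :=
  ∫⁻ t in Ioc 0 s, coneDensity μ f x t

/-- `(𝒜f(x))²` in the paper's notation. -/
noncomputable def areaIntegral (μ : Measure E) (f : E × ℝ → ℝ≥0∞) (x : E) : ℝ≥0∞ :=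
  ∫⁻ t in Ioi 0, coneDensity μ f x t

/-- `f(x, t)² dx dt / t` is a Carleson measure of norm at most `C`. -/
def IsCarleson (μ : Measure E) (f : E × ℝ → ℝ≥0∞) (C : ℝ≥0∞) : Prop :=
  ∀ (y : E) (h : ℝ), 0 < h →
    ∫⁻ t in Ioc 0 h, ∫⁻ x in ball y h, f (x, t) ^ 2 / ENNReal.ofReal t ∂μ
      ≤ C * ENNReal.ofReal (h ^ finrank ℝ E)

theorem setLIntegral_coneDensity_le_of_truncatedAreaIntegral_le (x : E) (L : ℝ≥0∞) :
    ∫⁻ t in {t | truncatedAreaIntegral μ f x t ≤ L} ∩ Ioi 0, coneDensity μ f x t ≤ L := by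
  rw [← withDensity_apply']
  exact measure_le_of_forall_measure_Ioc_le inter_subset_right fun s hs => by
    rw [withDensity_apply']
    exact hs.1

section Measurability

variable [SecondCountableTopology E] [OpensMeasurableSpace E] [SFinite μ]

theorem measurable_coneDensity (hf : Measurable f) :
    Measurable (Function.uncurry (coneDensity μ f)) :=
  measurable_setLIntegral_preimage_prodMk
    (f := fun q : (E × ℝ) × E =>
      f (q.2, q.1.2) ^ 2 / ENNReal.ofReal (q.1.2 ^ (finrank ℝ E + 1)))
    (s := {q | dist q.2 q.1.1 < q.1.2}) (by fun_prop)
    (measurableSet_lt (measurable_snd.dist measurable_fst.fst) measurable_fst.snd)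

theorem measurable_truncatedAreaIntegral (hf : Measurable f) :
    Measurable (Function.uncurry (truncatedAreaIntegral μ f)) :=
  measurable_setLIntegral_preimage_prodMk
    (f := fun q : (E × ℝ) × ℝ => coneDensity μ f q.1.1 q.2)
    (s := {q | 0 < q.2 ∧ q.2 ≤ q.1.2})
    ((measurable_coneDensity hf).comp (measurable_fst.fst.prodMk measurable_snd))
    ((measurableSet_lt measurable_const measurable_snd).inter
      (measurableSet_le measurable_snd measurable_fst.snd))

theorem sq_lintegral_cone_le (hf : Measurable f) (hg : Measurable g) (x : E)
    (ν : Measure ℝ) :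
    (∫⁻ t, ∫⁻ y in ball x t,
        f (y, t) * g (y, t) / ENNReal.ofReal (t ^ (finrank ℝ E + 1)) ∂μ ∂ν) ^ 2
      ≤ (∫⁻ t, coneDensity μ f x t ∂ν) * ∫⁻ t, coneDensity μ g x t ∂ν :=
  sq_lintegral_le_mul_lintegral
    ((measurable_coneDensity hf).comp measurable_prodMk_left).aemeasurable
    ((measurable_coneDensity hg).comp measurable_prodMk_left).aemeasurable
    fun t => sq_lintegral_le_mul_lintegral (by fun_prop) (by fun_prop) fun y =>
      le_of_eq (by simp only [div_eq_mul_inv]; ring)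

theorem setLIntegral_cone_le_of_truncatedAreaIntegral_le (hf : Measurable f)
    (hg : Measurable g) (x : E) (L : ℝ≥0∞) :
    ∫⁻ t in {t | truncatedAreaIntegral μ f x t ≤ L},
        ∫⁻ y in ball x t, f (y, t) * g (y, t) / ENNReal.ofReal (t ^ (finrank ℝ E + 1)) ∂μ
          ∂volume.restrict (Ioi 0)
      ≤ L ^ (1 / 2 : ℝ) * areaIntegral μ g x ^ (1 / 2 : ℝ) := by
  rw [← ENNReal.mul_rpow_of_nonneg _ _ (by norm_num), one_div,
    ENNReal.le_rpow_inv_iff (by norm_num), ENNReal.rpow_two]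
  refine (sq_lintegral_cone_le hf hg x _).trans (mul_le_mul' ?_ ?_)
  · rw [Measure.restrict_restrict' measurableSet_Ioi]
    exact setLIntegral_coneDensity_le_of_truncatedAreaIntegral_le x L
  · exact lintegral_mono' Measure.restrict_le_self le_rfl

end Measurability

section AddHaar

variable [BorelSpace E] [FiniteDimensional ℝ E] [μ.IsAddHaarMeasure]

theorem setLIntegral_coneDensity_le (hf : Measurable f) (y : E) {t h : ℝ} (ht : 0 < t)
    (hth : t ≤ h) :
    ∫⁻ x in ball y h, coneDensity μ f x t ∂μ
      ≤ μ (ball 0 1) * ∫⁻ z in ball y (2 * h), f (z, t) ^ 2 / ENNReal.ofReal t ∂μ := by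
  set ψ := fun z => f (z, t) ^ 2 / ENNReal.ofReal (t ^ (finrank ℝ E + 1))
  have hpt : ∀ z, ψ z * μ (ball z t ∩ ball y h)
      ≤ (ball y (2 * h)).indicator
          (fun z => μ (ball 0 1) * (f (z, t) ^ 2 / ENNReal.ofReal t)) z := by
    intro z
    by_cases hz : z ∈ ball y (2 * h)
    · rw [indicator_of_mem hz]
      calc _ ≤ ψ z * μ (ball z t) := by
            gcongr; exact inter_subset_left
        _ = μ (ball 0 1) * (f (z, t) ^ 2 / ENNReal.ofReal t) := by
            rw [Measure.addHaar_ball_of_pos μ z ht, ← mul_assoc,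
              ENNReal.div_ofReal_pow_succ_mul_ofReal_pow _ ht, mul_comm]
    · have hdisj : ball z t ∩ ball y h = ∅ := by
        refine eq_empty_of_forall_notMem fun x ⟨hxz, hxy⟩ => hz ?_
        rw [mem_ball] at hxz hxy ⊢
        linarith [dist_triangle z x y, dist_comm x z]
      simp [indicator_of_notMem hz, hdisj]
  calc ∫⁻ x in ball y h, coneDensity μ f x t ∂μ
      = ∫⁻ z, ψ z * μ (ball z t ∩ ball y h) ∂μ :=
        setLIntegral_lintegral_ball_eq (by fun_prop) _ _
    _ ≤ ∫⁻ z in ball y (2 * h), μ (ball 0 1) * (f (z, t) ^ 2 / ENNReal.ofReal t) ∂μ := by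
        rw [← lintegral_indicator measurableSet_ball]
        exact lintegral_mono hpt
    _ = _ := lintegral_const_mul' _ _ measure_ball_lt_top.ne

theorem setLIntegral_truncatedAreaIntegral_le (hf : Measurable f) {C : ℝ≥0∞}
    (hC : IsCarleson μ f C) (y : E) {h : ℝ} (hh : 0 < h) :
    ∫⁻ x in ball y h, truncatedAreaIntegral μ f x h ∂μ ≤ C * μ (ball y (2 * h)) := by
  calc ∫⁻ x in ball y h, truncatedAreaIntegral μ f x h ∂μ
      = ∫⁻ t in Ioc 0 h, ∫⁻ x in ball y h, coneDensity μ f x t ∂μ :=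
        lintegral_lintegral_swap (measurable_coneDensity hf).aemeasurable
    _ ≤ ∫⁻ t in Ioc 0 h, μ (ball 0 1) *
          ∫⁻ z in ball y (2 * h), f (z, t) ^ 2 / ENNReal.ofReal t ∂μ :=
        setLIntegral_mono' measurableSet_Ioc fun t ht =>
          setLIntegral_coneDensity_le hf y ht.1 ht.2
    _ ≤ μ (ball 0 1) * ∫⁻ t in Ioc 0 (2 * h),
          ∫⁻ z in ball y (2 * h), f (z, t) ^ 2 / ENNReal.ofReal t ∂μ := by
        rw [lintegral_const_mul' _ _ measure_ball_lt_top.ne]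
        exact mul_le_mul_right (lintegral_mono_set (Ioc_subset_Ioc_right (by linarith))) _
    _ ≤ μ (ball 0 1) * (C * ENNReal.ofReal ((2 * h) ^ finrank ℝ E)) := by
        gcongr
        exact hC y _ (by linarith)
    _ = C * μ (ball y (2 * h)) := by
        rw [Measure.addHaar_ball_of_pos μ y (by linarith)]
        ring

theorem measure_ball_le_two_mul_measure_inter (hf : Measurable f) {C : ℝ≥0∞}
    (hC : IsCarleson μ f C) (hCtop : C ≠ ∞) (y : E) {t : ℝ} (ht : 0 < t) :
    μ (ball y t) ≤
      2 * μ (ball y t ∩ {x | truncatedAreaIntegral μ f x t ≤ 2 ^ (finrank ℝ E + 1) * C}) := by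
  set L := (2 : ℝ≥0∞) ^ (finrank ℝ E + 1) * C with hL
  set m := μ (ball y t) with hm
  have hdouble : μ (ball y (2 * t)) = 2 ^ finrank ℝ E * m := by
    rw [hm, Measure.addHaar_ball_of_pos μ y (by positivity), Measure.addHaar_ball_of_pos μ y ht,
      mul_pow, ENNReal.ofReal_mul (by positivity), ENNReal.ofReal_pow zero_le_two,
      ENNReal.ofReal_ofNat, mul_assoc]
  have hbad : μ (ball y t ∩ {x | L < truncatedAreaIntegral μ f x t}) ≤ m / 2 := by
    refine measure_inter_lt_le_of_setLIntegral_le measurableSet_ball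
      ((measurable_truncatedAreaIntegral hf).comp measurable_prodMk_right).aemeasurable
      (by finiteness) ?_
    calc ∫⁻ x in ball y t, truncatedAreaIntegral μ f x t ∂μ ≤ C * μ (ball y (2 * t)) :=
          setLIntegral_truncatedAreaIntegral_le hf hC y ht
      _ = L * (m / 2) := by
          have hhalf : 2 * (m / 2) = m := ENNReal.mul_div_cancel two_ne_zero ofNat_ne_top
          conv_lhs => rw [hdouble, ← hhalf]
          rw [hL, pow_succ]
          ring
  have hsub : ball y t \ {x | truncatedAreaIntegral μ f x t ≤ L}
      ⊆ ball y t ∩ {x | L < truncatedAreaIntegral μ f x t} :=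
    fun x hx => ⟨hx.1, show L < _ from not_le.mp hx.2⟩
  have hsplit : m ≤ μ (ball y t ∩ {x | truncatedAreaIntegral μ f x t ≤ L}) + m / 2 :=
    (measure_le_inter_add_sdiff _ _ _).trans
      (add_le_add_right ((measure_mono hsub).trans hbad) _)
  rw [mul_comm, ← ENNReal.div_le_iff_le_mul (Or.inl two_ne_zero) (Or.inl ofNat_ne_top)]
  refine (ENNReal.add_le_add_iff_right (a := m / 2) (by finiteness)).mp ?_
  rwa [ENNReal.add_halves]

theorem lintegral_mul_div_le_of_isCarleson (hf : Measurable f) (hg : Measurable g)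
    {C : ℝ≥0∞} (hC : IsCarleson μ f C) (hCtop : C ≠ ∞) :
    ∫⁻ t in Ioi 0, ∫⁻ y, f (y, t) * g (y, t) / ENNReal.ofReal t ∂μ
      ≤ 2 * (μ (ball 0 1))⁻¹ * (2 ^ (finrank ℝ E + 1) * C) ^ (1 / 2 : ℝ)
          * ∫⁻ x, areaIntegral μ g x ^ (1 / 2 : ℝ) ∂μ := by
  set L := (2 : ℝ≥0∞) ^ (finrank ℝ E + 1) * C
  set ω := μ (ball 0 1)
  set Γ := {p : E × ℝ | truncatedAreaIntegral μ f p.1 p.2 ≤ L}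
  set φ : E × ℝ → ℝ≥0∞ := fun p => f p * g p / ENNReal.ofReal (p.2 ^ (finrank ℝ E + 1))
  have hΓ : MeasurableSet Γ := measurable_truncatedAreaIntegral hf measurableSet_Iic
  have hω : ω ≠ 0 := (measure_ball_pos μ 0 one_pos).ne'
  have hpoint : ∀ t ∈ Ioi (0 : ℝ), ∀ y, f (y, t) * g (y, t) / ENNReal.ofReal t
      ≤ 2 * ω⁻¹ * (φ (y, t) * μ (ball y t ∩ {x | (x, t) ∈ Γ})) := by
    intro t ht y
    have hvol : ENNReal.ofReal (t ^ finrank ℝ E) = ω⁻¹ * μ (ball y t) := by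
      rw [Measure.addHaar_ball_of_pos μ y ht, mul_comm,
        ENNReal.mul_inv_cancel_right hω measure_ball_lt_top.ne]
    calc f (y, t) * g (y, t) / ENNReal.ofReal t
        = φ (y, t) * (ω⁻¹ * μ (ball y t)) := by
          rw [← hvol, ENNReal.div_ofReal_pow_succ_mul_ofReal_pow _ ht]
      _ ≤ φ (y, t) * (ω⁻¹ * (2 * μ (ball y t ∩ {x | (x, t) ∈ Γ}))) := by
          gcongr
          exact measure_ball_le_two_mul_measure_inter hf hC hCtop y ht
      _ = _ := by ring
  have hc : 2 * ω⁻¹ ≠ ∞ := by finiteness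
  calc ∫⁻ t in Ioi 0, ∫⁻ y, f (y, t) * g (y, t) / ENNReal.ofReal t ∂μ
      ≤ ∫⁻ t in Ioi 0, ∫⁻ y,
          2 * ω⁻¹ * (φ (y, t) * μ (ball y t ∩ {x | (x, t) ∈ Γ})) ∂μ :=
        setLIntegral_mono' measurableSet_Ioi fun t ht => lintegral_mono (hpoint t ht)
    _ = 2 * ω⁻¹ * ∫⁻ x, ∫⁻ t in {t | (x, t) ∈ Γ},
          ∫⁻ y in ball x t, φ (y, t) ∂μ ∂volume.restrict (Ioi 0) ∂μ := by
        simp_rw [lintegral_const_mul' _ _ hc]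
        rw [lintegral_lintegral_mul_measure_ball_inter_eq (by fun_prop) hΓ]
    _ ≤ 2 * ω⁻¹ * ∫⁻ x, L ^ (1 / 2 : ℝ) * areaIntegral μ g x ^ (1 / 2 : ℝ) ∂μ := by
        gcongr with x
        exact setLIntegral_cone_le_of_truncatedAreaIntegral_le hf hg x L
    _ = _ := by
        rw [lintegral_const_mul' _ _ (by finiteness)]
        ring

end AddHaar

end UpperHalfSpace

/-- Fefferman's bilinear Carleson–square-function estimate: if `|F(x,t)|² dx dt / t` is a
Carleson measure with norm `‖μ‖_c`, and `𝒜G` is the conical square function of `G`, then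
`∬ |F| |G| dy dt / t ≤ C(n) ‖μ‖_c^{1/2} ‖𝒜G‖_{L¹}`. -/
theorem fefferman_bilinear_carleson
    (n : ℕ) :
    ∃ C > 0, ∀ (F G : EuclideanSpace ℝ (Fin n) × ℝ → ℂ), Measurable F → Measurable G →
      ∀ (Cc : ℝ), 0 ≤ Cc →
      (∀ (y : EuclideanSpace ℝ (Fin n)) (h : ℝ), 0 < h →
        ∫⁻ t in Ioc (0 : ℝ) h, ∫⁻ x in ball y h,
            ((‖F (x, t)‖₊ : ℝ≥0∞)) ^ 2 / ENNReal.ofReal t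
          ≤ ENNReal.ofReal (Cc * h ^ n)) →
      (∫⁻ t in Ioi (0 : ℝ), ∫⁻ y : EuclideanSpace ℝ (Fin n),
          (‖F (y, t)‖₊ : ℝ≥0∞) * (‖G (y, t)‖₊ : ℝ≥0∞) / ENNReal.ofReal t)
        ≤ ENNReal.ofReal (C * Real.sqrt Cc) *
            ∫⁻ x : EuclideanSpace ℝ (Fin n),
              (∫⁻ t in Ioi (0 : ℝ), ∫⁻ y in ball x t,
                ((‖G (y, t)‖₊ : ℝ≥0∞)) ^ 2 / ENNReal.ofReal (t ^ (n + 1))) ^ (1/2 : ℝ) := by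
  set ω := volume (ball (0 : EuclideanSpace ℝ (Fin n)) 1)
  have hω : 0 < ω.toReal :=
    ENNReal.toReal_pos (measure_ball_pos _ _ one_pos).ne' measure_ball_lt_top.ne
  refine ⟨2 * Real.sqrt (2 ^ (n + 1)) / ω.toReal, by positivity, ?_⟩
  intro F G hF hG Cc hCc hCar
  have hCarleson : IsCarleson volume (fun p => (‖F p‖₊ : ℝ≥0∞)) (ENNReal.ofReal Cc) :=
    fun y h hh => by
      rw [finrank_euclideanSpace_fin, ← ENNReal.ofReal_mul hCc]
      exact hCar y h hh
  have hconst : 2 * ω⁻¹ * (2 ^ (n + 1) * ENNReal.ofReal Cc) ^ (1 / 2 : ℝ)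
      = ENNReal.ofReal (2 * Real.sqrt (2 ^ (n + 1)) / ω.toReal * Real.sqrt Cc) := by
    have hinv : ω⁻¹ = ENNReal.ofReal ω.toReal⁻¹ := by
      rw [ENNReal.ofReal_inv_of_pos hω, ENNReal.ofReal_toReal measure_ball_lt_top.ne]
    have hsqrt : (2 ^ (n + 1) * ENNReal.ofReal Cc) ^ (1 / 2 : ℝ)
        = ENNReal.ofReal (Real.sqrt (2 ^ (n + 1) * Cc)) := by
      rw [← ENNReal.ofReal_ofNat 2, ← ENNReal.ofReal_pow zero_le_two,
        ← ENNReal.ofReal_mul (by positivity),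
        ENNReal.ofReal_rpow_of_nonneg (by positivity) (by norm_num), Real.sqrt_eq_rpow]
    rw [hinv, hsqrt, ← ENNReal.ofReal_ofNat 2, ← ENNReal.ofReal_mul zero_le_two,
      ← ENNReal.ofReal_mul (by positivity), Real.sqrt_mul (by positivity)]
    ring_nf
  have key := lintegral_mul_div_le_of_isCarleson hF.nnnorm.coe_nnreal_ennreal
    hG.nnnorm.coe_nnreal_ennreal hCarleson ENNReal.ofReal_ne_top
  simp only [areaIntegral, coneDensity, finrank_euclideanSpace_fin] at key
  rwa [hconst] at key
end

section
/- Let F : ℝⁿ × (0,∞) → ℂ be measurable and β ≥ 1. Define N_*^β F(x) := sup_{(y,t): |x-y| < βt} |F(y,t)|. Then the distribution function satisfies |{x : N_*^β F(x) > λ}| ≤ C(n) βⁿ |{x : N_*^1 F(x) > λ}| for every λ > 0, and consequently ‖N_*^β F‖_{L²(ℝⁿ)} ≤ C(n)^{1/2} β^{n/2} ‖N_*^1 F‖_{L²(ℝⁿ)}. -/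
/-!
If `N^β F(x) > λ` is witnessed by `(y, t)` with `|x - y| < β t`, then `x ∈ B(y, β t)` while the
whole ball `B(y, t)` lies in `{N^1 F > λ}`. The Vitali covering lemma extracts from the balls
`B(y, β t)` a disjoint subfamily whose 4-fold enlargements cover `{N^β F > λ}`; each enlargement
has measure `(4β)ⁿ |B(y, t)|`, and the balls `B(y, t)` are disjoint inside `{N^1 F > λ}`, so
`|{N^β F > λ}| ≤ (4β)ⁿ |{N^1 F > λ}|`. The `L²` bound follows by the layer-cake formula.
-/

open MeasureTheory Metric Set ENNReal

/-- The nontangential maximal function of aperture `β`. -/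
noncomputable def ntMax {n : ℕ} (β : ℝ) (F : EuclideanSpace ℝ (Fin n) × ℝ → ℂ)
    (x : EuclideanSpace ℝ (Fin n)) : ℝ≥0∞ :=
  ⨆ (y : EuclideanSpace ℝ (Fin n)) (t : ℝ) (_ : dist x y < β * t ∧ 0 < t),
    (‖F (y, t)‖₊ : ℝ≥0∞)

open Module

section Covering

variable {E : Type*} [NormedAddCommGroup E] [NormedSpace ℝ E] [FiniteDimensional ℝ E]
  [MeasurableSpace E] [BorelSpace E] (μ : Measure E) [μ.IsAddHaarMeasure]

theorem addHaar_le_of_forall_exists_ball_subset_of_le {A S : Set E} {β R : ℝ} (hβ : 1 ≤ β)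
    (H : ∀ x ∈ A, ∃ y t, 0 < t ∧ t ≤ R ∧ dist x y < β * t ∧ ball y t ⊆ S) :
    μ A ≤ ENNReal.ofReal ((4 * β) ^ finrank ℝ E) * μ S := by
  choose! y t ht_pos ht_le hxy hS using H
  obtain ⟨u, huA, hdisj, hcov⟩ := Vitali.exists_disjoint_subfamily_covering_enlargement_closedBall
    A y (fun x => β * t x) (β * R) (fun x hx => by gcongr; exacts [ht_le x hx]) 4 (by norm_num)
  have hball_sub : ∀ b ∈ u, ball (y b) (t b) ⊆ closedBall (y b) (β * t b) := fun b hb =>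
    ball_subset_closedBall.trans
      (closedBall_subset_closedBall (le_mul_of_one_le_left (ht_pos b (huA hb)).le hβ))
  have hdisj_ball : u.PairwiseDisjoint fun b => ball (y b) (t b) := hdisj.mono_on hball_sub
  have hcount : u.Countable := hdisj_ball.countable_of_isOpen (fun _ _ => isOpen_ball)
    fun b hb => nonempty_ball.2 (ht_pos b (huA hb))
  have hA : A ⊆ ⋃ b ∈ u, closedBall (y b) (4 * (β * t b)) := by
    intro a ha
    obtain ⟨b, hb, hab⟩ := hcov a ha
    exact mem_biUnion hb (hab (mem_closedBall.2 (hxy a ha).le))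
  calc μ A ≤ ∑' b : u, μ (closedBall (y b) (4 * (β * t b))) :=
        (measure_mono hA).trans (measure_biUnion_le μ hcount _)
    _ = ∑' b : u, ENNReal.ofReal ((4 * β) ^ finrank ℝ E) * μ (ball (y b) (t b)) := by
        refine tsum_congr fun b => ?_
        have htb := ht_pos b (huA b.2)
        rw [Measure.addHaar_closedBall μ _ (by positivity), Measure.addHaar_ball_of_pos μ _ htb,
          ← mul_assoc (ENNReal.ofReal _), ← ENNReal.ofReal_mul (by positivity), ← mul_pow,
          mul_assoc 4 β]
    _ = ENNReal.ofReal ((4 * β) ^ finrank ℝ E) * μ (⋃ b ∈ u, ball (y b) (t b)) := by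
        rw [ENNReal.tsum_mul_left, measure_biUnion hcount hdisj_ball fun _ _ => measurableSet_ball]
    _ ≤ ENNReal.ofReal ((4 * β) ^ finrank ℝ E) * μ S := by
        gcongr
        exact iUnion₂_subset fun b hb => hS b (huA hb)

theorem addHaar_le_of_forall_exists_ball_subset {A S : Set E} {β : ℝ} (hβ : 1 ≤ β)
    (H : ∀ x ∈ A, ∃ y t, 0 < t ∧ dist x y < β * t ∧ ball y t ⊆ S) :
    μ A ≤ ENNReal.ofReal ((4 * β) ^ finrank ℝ E) * μ S := by
  -- Vitali needs bounded radii: exhaust `A` by the points having a witness of radius `≤ k`.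
  let A' : ℕ → Set E := fun k =>
    {x | ∃ y, ∃ t : ℝ, 0 < t ∧ t ≤ k ∧ dist x y < β * t ∧ ball y t ⊆ S}
  have hA'_mono : Monotone A' := fun k l hkl x ⟨y, t, ht, htk, hxy, hS⟩ =>
    ⟨y, t, ht, htk.trans (by exact_mod_cast hkl), hxy, hS⟩
  have hA : A ⊆ ⋃ k, A' k := fun x hx => by
    obtain ⟨y, t, ht, hxy, hS⟩ := H x hx
    obtain ⟨k, hk⟩ := exists_nat_ge t
    exact mem_iUnion.2 ⟨k, y, t, ht, hk, hxy, hS⟩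
  calc μ A ≤ ⨆ k, μ (A' k) := (measure_mono hA).trans_eq hA'_mono.measure_iUnion
    _ ≤ _ := iSup_le fun k => addHaar_le_of_forall_exists_ball_subset_of_le μ hβ fun _ hx => hx

end Covering

section LayerCake

variable {α : Type*} [MeasurableSpace α] {μ : Measure α}

theorem lintegral_ofReal_rpow_le_of_meas_lt_le {f g : α → ℝ} (hf : 0 ≤ᵐ[μ] f) (hg : 0 ≤ᵐ[μ] g)
    (hf_meas : AEMeasurable f μ) (hg_meas : AEMeasurable g μ) {K : ℝ≥0∞} {p : ℝ} (hp : 0 < p)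
    (h : ∀ t : ℝ, 0 < t → μ {x | t < f x} ≤ K * μ {x | t < g x}) :
    ∫⁻ x, ENNReal.ofReal (f x ^ p) ∂μ ≤ K * ∫⁻ x, ENNReal.ofReal (g x ^ p) ∂μ := by
  have hg_dist : Measurable fun t : ℝ => μ {x | t < g x} * ENNReal.ofReal (t ^ (p - 1)) := by
    refine Measurable.mul ?_ (by fun_prop)
    exact Antitone.measurable fun s t hst => measure_mono fun x hx => lt_of_le_of_lt hst hx
  rw [lintegral_rpow_eq_lintegral_meas_lt_mul μ hf hf_meas hp,
    lintegral_rpow_eq_lintegral_meas_lt_mul μ hg hg_meas hp, mul_left_comm,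
    ← lintegral_const_mul K hg_dist]
  gcongr _ * ?_
  refine setLIntegral_mono' measurableSet_Ioi fun t ht => ?_
  rw [← mul_assoc]
  exact mul_le_mul_left (h t ht) _

theorem lintegral_rpow_le_of_meas_lt_le {f g : α → ℝ≥0∞} (hf : Measurable f)
    (hg : Measurable g) {K : ℝ≥0∞} {p : ℝ} (hp : 0 < p)
    (h : ∀ t : ℝ, 0 < t → μ {x | ENNReal.ofReal t < f x} ≤ K * μ {x | ENNReal.ofReal t < g x}) :
    ∫⁻ x, f x ^ p ∂μ ≤ K * ∫⁻ x, g x ^ p ∂μ := by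
  -- Truncating at height `N` reduces to real-valued functions; then let `N → ∞`.
  have trunc_rpow : ∀ (a : ℝ≥0∞) (N : ℕ),
      ENNReal.ofReal ((min a N).toReal ^ p) = min a N ^ p := fun a N => by
    rw [← ENNReal.ofReal_rpow_of_nonneg toReal_nonneg hp.le,
      ofReal_toReal (min_lt_of_right_lt (natCast_lt_top N)).ne]
  have trunc_meas : ∀ (u : α → ℝ≥0∞) (N : ℕ) {t : ℝ}, 0 < t →
      {x | t < (min (u x) N).toReal} = {x | ENNReal.ofReal t < u x ∧ ENNReal.ofReal t < N} :=
    fun u N t ht => by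
      ext x
      rw [mem_ofPred_eq, ← ofReal_lt_iff_lt_toReal ht.le
        (min_lt_of_right_lt (natCast_lt_top N)).ne, lt_min_iff, mem_ofPred_eq]
  have h_trunc : ∀ N : ℕ, ∫⁻ x, min (f x) N ^ p ∂μ ≤ K * ∫⁻ x, g x ^ p ∂μ := fun N => by
    calc ∫⁻ x, min (f x) N ^ p ∂μ ≤ K * ∫⁻ x, min (g x) N ^ p ∂μ := by
          simp only [← trunc_rpow]
          refine lintegral_ofReal_rpow_le_of_meas_lt_le (.of_forall fun _ => toReal_nonneg)
            (.of_forall fun _ => toReal_nonneg) (by fun_prop) (by fun_prop) hp fun t ht => ?_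
          rw [trunc_meas f N ht, trunc_meas g N ht]
          by_cases htN : ENNReal.ofReal t < N
          · simpa only [htN, and_true] using h t ht
          · simp only [htN, and_false, ofPred_false, measure_empty, zero_le]
      _ ≤ K * ∫⁻ x, g x ^ p ∂μ := by
          gcongr with x
          exact min_le_left _ _
  have h_iSup : ∀ a : ℝ≥0∞, a ^ p = ⨆ N : ℕ, min a N ^ p := fun a => by
    have := (orderIsoRpow p hp).map_iSup fun N : ℕ => min a N
    rwa [orderIsoRpow_apply, ← inf_iSup_eq, iSup_natCast, inf_top_eq] at this
  rw [lintegral_congr fun x => h_iSup (f x),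
    lintegral_iSup (fun N => by fun_prop) fun M N hMN x => by gcongr]
  exact iSup_le h_trunc

end LayerCake

section NtMax

variable {n : ℕ} {β : ℝ} {F : EuclideanSpace ℝ (Fin n) × ℝ → ℂ}

theorem setOf_lt_ntMax_eq_iUnion_ball (c : ℝ≥0∞) :
    {x | c < ntMax β F x} = ⋃ (y) (t : ℝ) (_ : 0 < t ∧ c < ‖F (y, t)‖₊), ball y (β * t) := by
  ext x
  simp only [ntMax, mem_ofPred_eq, lt_iSup_iff, exists_prop, mem_iUnion, mem_ball]
  grind [dist_comm]

theorem isOpen_setOf_lt_ntMax (c : ℝ≥0∞) : IsOpen {x | c < ntMax β F x} := by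
  rw [setOf_lt_ntMax_eq_iUnion_ball]
  exact isOpen_iUnion fun y => isOpen_iUnion fun t => isOpen_iUnion fun _ => isOpen_ball

theorem measurable_ntMax : Measurable (ntMax β F) :=
  measurable_of_Ioi fun c => (isOpen_setOf_lt_ntMax c).measurableSet

theorem volume_setOf_lt_ntMax_le (hβ : 1 ≤ β) (c : ℝ≥0∞) :
    volume {x | c < ntMax β F x} ≤
      ENNReal.ofReal ((4 * β) ^ n) * volume {x | c < ntMax 1 F x} := by
  have h_witness : ∀ x ∈ {x | c < ntMax β F x}, ∃ y t, 0 < t ∧ dist x y < β * t ∧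
      ball y t ⊆ {x | c < ntMax 1 F x} := by
    simp only [setOf_lt_ntMax_eq_iUnion_ball, mem_iUnion, mem_ball, one_mul]
    rintro x ⟨y, t, hyt, hx⟩
    exact ⟨y, t, hyt.1, hx, subset_iUnion_of_subset y <| subset_iUnion_of_subset t <|
      subset_iUnion_of_subset hyt subset_rfl⟩
  simpa only [finrank_euclideanSpace_fin] using
    addHaar_le_of_forall_exists_ball_subset volume hβ h_witness

end NtMax

/-- Fefferman–Stein aperture change: the distribution function of `N_*^β F` is controlled by
`C(n) βⁿ` times that of `N_*^1 F`, and consequently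
`‖N_*^β F‖_{L²} ≤ C(n)^{1/2} β^{n/2} ‖N_*^1 F‖_{L²}`. -/
theorem aperture_change
    (n : ℕ) :
    ∃ C > 0, ∀ (F : EuclideanSpace ℝ (Fin n) × ℝ → ℂ) (β : ℝ), 1 ≤ β →
      (∀ lam : ℝ, 0 < lam →
        volume {x : EuclideanSpace ℝ (Fin n) | ENNReal.ofReal lam < ntMax β F x}
          ≤ ENNReal.ofReal (C * β ^ n) *
            volume {x : EuclideanSpace ℝ (Fin n) | ENNReal.ofReal lam < ntMax 1 F x}) ∧
      (∫⁻ x, (ntMax β F x) ^ 2) ^ (1/2 : ℝ)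
        ≤ ENNReal.ofReal (Real.sqrt C * β ^ ((n : ℝ) / 2)) *
          (∫⁻ x, (ntMax 1 F x) ^ 2) ^ (1/2 : ℝ) := by
  refine ⟨4 ^ n, by positivity, fun F β hβ => ?_⟩
  have hβ0 : 0 < β := zero_lt_one.trans_le hβ
  have h_dist : ∀ lam : ℝ, 0 < lam →
      volume {x | ENNReal.ofReal lam < ntMax β F x}
        ≤ ENNReal.ofReal (4 ^ n * β ^ n) * volume {x | ENNReal.ofReal lam < ntMax 1 F x} :=
    fun lam _ => mul_pow (4 : ℝ) β n ▸ volume_setOf_lt_ntMax_le hβ _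
  refine ⟨h_dist, ?_⟩
  have h_sq := lintegral_rpow_le_of_meas_lt_le measurable_ntMax measurable_ntMax two_pos h_dist
  simp only [ENNReal.rpow_two] at h_sq
  calc (∫⁻ x, ntMax β F x ^ 2) ^ (1/2 : ℝ)
      ≤ (ENNReal.ofReal (4 ^ n * β ^ n) * ∫⁻ x, ntMax 1 F x ^ 2) ^ (1/2 : ℝ) := by gcongr
    _ = _ := by
        rw [ENNReal.mul_rpow_of_nonneg _ _ (by norm_num),
          ENNReal.ofReal_rpow_of_pos (by positivity), Real.mul_rpow (by positivity) (by positivity),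
          ← Real.sqrt_eq_rpow, ← Real.rpow_natCast β, ← Real.rpow_mul hβ0.le]
        ring_nf
end
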